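/- For every channel Λ : M_{d_A}(ℂ) → M_{d_B}(ℂ) and every n ∈ ℕ, the channel tempered negativity is supermultiplicative under tensor powers: N_τ(Λ^{⊗n}) ≥ N_τ(Λ)^n. -/

import Mathlib

open Matrix
open scoped ComplexOrder

section Defs

variable {ιA ιB : Type*}

def ptranspose (M : Matrix (ιA × ιB) (ιA × ιB) ℂ) : Matrix (ιA × ιB) (ιA × ιB) ℂ :=
  Matrix.of fun p q => M (p.1, q.2) (q.1, p.2)

def IsPPT [Fintype ιA] [Fintype ιB] (M : Matrix (ιA × ιB) (ιA × ιB) ℂ) : Prop :=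
  M.PosSemidef ∧ (ptranspose M).PosSemidef

def IsState {ι : Type*} [Fintype ι] (ρ : Matrix ι ι ℂ) : Prop :=
  ρ.PosSemidef ∧ ρ.trace = 1

def idTensor (ιR : Type*) (Φ : Matrix ιA ιA ℂ →ₗ[ℂ] Matrix ιB ιB ℂ) :
    Matrix (ιR × ιA) (ιR × ιA) ℂ →ₗ[ℂ] Matrix (ιR × ιB) (ιR × ιB) ℂ where
  toFun M := Matrix.of fun p q => Φ (Matrix.of fun a b => M (p.1, a) (q.1, b)) p.2 q.2
  map_add' M N := by
    funext p q
    show Φ ((Matrix.of fun a b => M (p.1, a) (q.1, b)) + (Matrix.of fun a b => N (p.1, a) (q.1, b))) p.2 q.2 = _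
    rw [map_add]
    rfl
  map_smul' c M := by
    funext p q
    show Φ (c • (Matrix.of fun a b => M (p.1, a) (q.1, b))) p.2 q.2 = _
    rw [_root_.map_smul]
    rfl

noncomputable def opNorm {ι : Type*} [Fintype ι] [DecidableEq ι] (M : Matrix ι ι ℂ) : ℝ :=
  ‖Matrix.toEuclideanCLM (𝕜 := ℂ) (n := ι) M‖

noncomputable def traceNorm {ι : Type*} [Fintype ι] [DecidableEq ι] (M : Matrix ι ι ℂ) : ℝ :=
  ((((Matrix.posSemidef_conjTranspose_mul_self M).1.eigenvectorUnitary : Matrix ι ι ℂ) *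
    Matrix.diagonal (fun i => ((Real.sqrt ((Matrix.posSemidef_conjTranspose_mul_self M).1.eigenvalues i) : ℝ) : ℂ)) *
    (star (Matrix.posSemidef_conjTranspose_mul_self M).1.eigenvectorUnitary : Matrix ι ι ℂ)).trace).re

/-- The tempered negativity `N_τ(ρ|ω)`. -/
noncomputable def temperedNegRel [Fintype ιA] [Fintype ιB] [DecidableEq ιA] [DecidableEq ιB]
    (ρ ω : Matrix (ιA × ιB) (ιA × ιB) ℂ) : ℝ :=
  sSup {t : ℝ | ∃ X : Matrix (ιA × ιB) (ιA × ιB) ℂ, X.IsHermitian ∧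
    opNorm (ptranspose X) ≤ 1 ∧ opNorm X = ((X * ω).trace).re ∧ t = ((X * ρ).trace).re}

noncomputable def temperedNeg [Fintype ιA] [Fintype ιB] [DecidableEq ιA] [DecidableEq ιB]
    (ρ : Matrix (ιA × ιB) (ιA × ιB) ℂ) : ℝ :=
  temperedNegRel ρ ρ

/-- The tempered PPT robustness `R^τ(ρ|ω)`, via `1 + 2 R^τ(ρ|ω) = sup {...}`. -/
noncomputable def temperedRobRel [Fintype ιA] [Fintype ιB] [DecidableEq ιA] [DecidableEq ιB]
    (ρ ω : Matrix (ιA × ιB) (ιA × ιB) ℂ) : ℝ :=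
  (sSup {t : ℝ | ∃ X : Matrix (ιA × ιB) (ιA × ιB) ℂ, X.IsHermitian ∧
    (∀ W : Matrix (ιA × ιB) (ιA × ιB) ℂ, IsPPT W → |((X * W).trace).re| ≤ (W.trace).re) ∧
    opNorm X = ((X * ω).trace).re ∧ t = ((X * ρ).trace).re} - 1) / 2

noncomputable def temperedRob [Fintype ιA] [Fintype ιB] [DecidableEq ιA] [DecidableEq ιB]
    (ρ : Matrix (ιA × ιB) (ιA × ιB) ℂ) : ℝ :=
  temperedRobRel ρ ρ

/-- The channel tempered negativity. -/
noncomputable def chanTemperedNeg [Fintype ιA] [Fintype ιB] [DecidableEq ιA] [DecidableEq ιB]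
    (Λ : Matrix ιA ιA ℂ →ₗ[ℂ] Matrix ιB ιB ℂ) : ℝ :=
  sSup {t : ℝ | ∃ ρ : Matrix (ιA × ιA) (ιA × ιA) ℂ, IsState ρ ∧
    t = temperedNeg ((idTensor ιA Λ) ρ)}

/-- The channel tempered robustness `R^τ(Λ'|Λ)`. -/
noncomputable def chanTemperedRobRel [Fintype ιA] [Fintype ιB] [DecidableEq ιA] [DecidableEq ιB]
    (Λ' Λ : Matrix ιA ιA ℂ →ₗ[ℂ] Matrix ιB ιB ℂ) : ℝ :=
  sSup {t : ℝ | ∃ ρ : Matrix (ιA × ιA) (ιA × ιA) ℂ, IsState ρ ∧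
    t = temperedRobRel ((idTensor ιA Λ') ρ) ((idTensor ιA Λ) ρ)}

/-- The diamond norm. -/
noncomputable def diamondNorm [Fintype ιA] [Fintype ιB] [DecidableEq ιA] [DecidableEq ιB]
    (Φ : Matrix ιA ιA ℂ →ₗ[ℂ] Matrix ιB ιB ℂ) : ℝ :=
  sSup {t : ℝ | ∃ ρ : Matrix (ιA × ιA) (ιA × ιA) ℂ, IsState ρ ∧
    t = traceNorm ((idTensor ιA Φ) ρ)}

/-- The `n`-fold tensor power of a linear map on matrices. -/
noncomputable def tensorPow [Fintype ιA] [DecidableEq ιA] (n : ℕ)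
    (Λ : Matrix ιA ιA ℂ →ₗ[ℂ] Matrix ιB ιB ℂ) :
    Matrix (Fin n → ιA) (Fin n → ιA) ℂ →ₗ[ℂ] Matrix (Fin n → ιB) (Fin n → ιB) ℂ where
  toFun M := Matrix.of fun p q => ∑ a : Fin n → ιA, ∑ b : Fin n → ιA,
      M a b * ∏ i, Λ (Matrix.single (a i) (b i) 1) (p i) (q i)
  map_add' M N := by
    funext p q
    simp [Matrix.add_apply, add_mul, Finset.sum_add_distrib]
  map_smul' c M := by
    funext p q
    simp [Matrix.smul_apply, Finset.mul_sum, mul_assoc]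

/-- The `n`-fold tensor power of a bipartite state, regarded as bipartite across the `Aⁿ:Bⁿ` cut. -/
noncomputable def statePow (n : ℕ) (ρ : Matrix (ιA × ιB) (ιA × ιB) ℂ) :
    Matrix ((Fin n → ιA) × (Fin n → ιB)) ((Fin n → ιA) × (Fin n → ιB)) ℂ :=
  Matrix.of fun p q => ∏ i, ρ (p.1 i, p.2 i) (q.1 i, q.2 i)

/-- The Choi matrix `J_Φ = (1/d_A) ∑_{ij} |i⟩⟨j| ⊗ Φ(|i⟩⟨j|)`. -/
noncomputable def choi [Fintype ιA] [DecidableEq ιA]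
    (Φ : Matrix ιA ιA ℂ →ₗ[ℂ] Matrix ιB ιB ℂ) : Matrix (ιA × ιB) (ιA × ιB) ℂ :=
  Matrix.of fun p q => (Fintype.card ιA : ℂ)⁻¹ * Φ (Matrix.single p.1 q.1 1) p.2 q.2


/-- Complete positivity. -/
def IsCP [Fintype ιA] [Fintype ιB] (Φ : Matrix ιA ιA ℂ →ₗ[ℂ] Matrix ιB ιB ℂ) : Prop :=
  ∀ (k : ℕ) (X : Matrix (Fin k × ιA) (Fin k × ιA) ℂ), X.PosSemidef →
    ((idTensor (Fin k) Φ) X).PosSemidef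

/-- Trace preservation. -/
def IsTP [Fintype ιA] [Fintype ιB] (Φ : Matrix ιA ιA ℂ →ₗ[ℂ] Matrix ιB ιB ℂ) : Prop :=
  ∀ X : Matrix ιA ιA ℂ, (Φ X).trace = X.trace

/-- A quantum channel: completely positive and trace preserving. -/
def IsChannel [Fintype ιA] [Fintype ιB] (Φ : Matrix ιA ιA ℂ →ₗ[ℂ] Matrix ιB ιB ℂ) : Prop :=
  IsCP Φ ∧ IsTP Φ

/-- A map is PPT-binding if `id_k ⊗ Φ` sends positive semidefinite matrices to PPT matrices. -/
def PPTBinding [Fintype ιA] [Fintype ιB] (Φ : Matrix ιA ιA ℂ →ₗ[ℂ] Matrix ιB ιB ℂ) : Prop :=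
  ∀ (k : ℕ) (X : Matrix (Fin k × ιA) (Fin k × ιA) ℂ), X.PosSemidef →
    IsPPT ((idTensor (Fin k) Φ) X)

/-- A PPT-binding channel. -/
def PPTBindingChannel [Fintype ιA] [Fintype ιB] (Φ : Matrix ιA ιA ℂ →ₗ[ℂ] Matrix ιB ιB ℂ) : Prop :=
  IsChannel Φ ∧ PPTBinding Φ

/-- The channel robustness with respect to PPT-binding channels. -/
noncomputable def RKE [Fintype ιA] [Fintype ιB] (Λ : Matrix ιA ιA ℂ →ₗ[ℂ] Matrix ιB ιB ℂ) : ℝ :=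
  sInf {l : ℝ | 0 ≤ l ∧ ∃ Γ Θ : Matrix ιA ιA ℂ →ₗ[ℂ] Matrix ιB ιB ℂ,
    PPTBindingChannel Γ ∧ PPTBindingChannel Θ ∧ Λ + (l : ℂ) • Γ = ((1 + l : ℝ) : ℂ) • Θ}

/-- The PPT robustness of a state. -/
noncomputable def RPPT [Fintype ιA] [Fintype ιB] (ρ : Matrix (ιA × ιB) (ιA × ιB) ℂ) : ℝ :=
  sInf {t : ℝ | ∃ δ : Matrix (ιA × ιB) (ιA × ιB) ℂ, IsPPT δ ∧ IsPPT (ρ + δ) ∧ (δ.trace).re = t}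


end Defs

/-!
Fix a state `ρ` and put `σ = (id ⊗ Λ)(ρ)`, a state since `Λ` is a channel. If `X` is feasible for
`N_τ(σ)`, then so is `X^{⊗n}` for `N_τ(σ^{⊗n})`: `(X^{⊗n})^Γ = (X^Γ)^{⊗n}` has norm at most
`‖X^Γ‖ⁿ ≤ 1`, and `‖X^{⊗n}‖ ≤ ‖X‖ⁿ = Tr(Xσ)ⁿ = Tr(X^{⊗n} σ^{⊗n}) ≤ ‖X^{⊗n}‖`. Hence
`N_τ(σ)ⁿ ≤ N_τ(σ^{⊗n})`, and `σ^{⊗n} = (id ⊗ Λ^{⊗n})(ρ^{⊗n})` with `ρ^{⊗n}` a state, so this is at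
most `N_τ(Λ^{⊗n})`. Taking the supremum over `ρ` gives the claim.
-/

-- Under `Matrix.Norms.L2Operator`, `‖M‖` is definitionally `opNorm M`.
open scoped Kronecker InnerProductSpace Matrix.Norms.L2Operator

-- `h0` covers the junk value `sSup T = 0` of an empty or unbounded `T`.
lemma sSup_pow_le_of_forall {T : Set ℝ} {D : ℝ} {n : ℕ} (h0 : (0 : ℝ) ^ n ≤ D)
    (hT : ∀ v ∈ T, 0 ≤ v ∧ v ^ n ≤ D) : sSup T ^ n ≤ D := by
  rcases n.eq_zero_or_pos with rfl | hn
  · simpa using h0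
  have hD : 0 ≤ D := by simpa [zero_pow hn.ne'] using h0
  have hroot : sSup T ≤ D ^ (n⁻¹ : ℝ) := by
    refine Real.sSup_le (fun v hv => ?_) (by positivity)
    obtain ⟨hv0, hvD⟩ := hT v hv
    calc v = (v ^ n) ^ (n⁻¹ : ℝ) := (Real.pow_rpow_inv_natCast hv0 hn.ne').symm
      _ ≤ D ^ (n⁻¹ : ℝ) := by gcongr
  calc sSup T ^ n ≤ (D ^ (n⁻¹ : ℝ)) ^ n :=
        pow_le_pow_left₀ (Real.sSup_nonneg fun v hv => (hT v hv).1) hroot n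
    _ = D := Real.rpow_inv_natCast_pow hD hn.ne'

namespace Matrix

section PosSemidef

variable {ι : Type*} [Fintype ι]

lemma PosSemidef.exists_eq_star_mul_self {ρ : Matrix ι ι ℂ} (hρ : ρ.PosSemidef) :
    ∃ B, ρ = star B * B := by
  classical
  open scoped MatrixOrder in exact CStarAlgebra.nonneg_iff_eq_star_mul_self.mp hρ.nonneg

-- Writing `ρ = Bᴴ B`, the entries of `ρ` are inner products of the columns of `B`.
lemma PosSemidef.norm_apply_le_re_trace {ρ : Matrix ι ι ℂ} (hρ : ρ.PosSemidef) (p q : ι) :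
    ‖ρ p q‖ ≤ ρ.trace.re := by
  obtain ⟨B, rfl⟩ := hρ.exists_eq_star_mul_self
  let col : ι → EuclideanSpace ℂ ι := fun p => WithLp.toLp 2 fun k => B k p
  have hentry : ∀ p q, (star B * B) p q = ⟪col p, col q⟫_ℂ := fun p q => by
    simp [col, mul_apply, PiLp.inner_apply, mul_comm]
  have htrace : (star B * B).trace.re = ∑ p, ‖col p‖ ^ 2 := by
    simp [trace, hentry, inner_self_eq_norm_sq_to_K, ← Complex.ofReal_pow]
  have hcol : ∀ p, ‖col p‖ ^ 2 ≤ (star B * B).trace.re := fun p => by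
    rw [htrace]
    exact Finset.single_le_sum (fun p _ => sq_nonneg ‖col p‖) (Finset.mem_univ p)
  rw [hentry]
  nlinarith [norm_inner_le_norm (𝕜 := ℂ) (col p) (col q), hcol p, hcol q,
    sq_nonneg (‖col p‖ - ‖col q‖)]

lemma IsHermitian.ofReal_re_trace_mul {X σ : Matrix ι ι ℂ} (hX : X.IsHermitian)
    (hσ : σ.IsHermitian) : (((X * σ).trace.re : ℝ) : ℂ) = (X * σ).trace := by
  rw [← Complex.conj_eq_iff_re, starRingEnd_apply, ← trace_conjTranspose, conjTranspose_mul,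
    hX.eq, hσ.eq, trace_mul_comm]

end PosSemidef

section L2OpNorm

variable {ι κ : Type*} [Fintype ι] [DecidableEq ι] [Fintype κ] [DecidableEq κ]

lemma norm_apply_le_l2_opNorm (M : Matrix ι ι ℂ) (i j : ι) : ‖M i j‖ ≤ ‖M‖ :=
  calc ‖M i j‖ = ‖toEuclideanCLM (𝕜 := ℂ) (n := ι) M (EuclideanSpace.single j 1) i‖ := by simp
    _ ≤ ‖toEuclideanCLM (𝕜 := ℂ) (n := ι) M (EuclideanSpace.single j 1)‖ :=
        PiLp.norm_apply_le _ _
    _ ≤ ‖M‖ * ‖EuclideanSpace.single j (1 : ℂ)‖ := (toEuclideanCLM (𝕜 := ℂ) (n := ι) M).le_opNorm _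
    _ = ‖M‖ := by simp

def reindexStarAlgEquiv (e : ι ≃ κ) : Matrix ι ι ℂ ≃⋆ₐ[ℂ] Matrix κ κ ℂ :=
  .ofAlgEquiv (reindexAlgEquiv ℂ ℂ e) fun M => (conjTranspose_reindex e e M).symm

lemma l2_opNorm_submatrix_equiv (M : Matrix ι ι ℂ) (e : κ ≃ ι) : ‖M.submatrix e e‖ = ‖M‖ :=
  StarAlgEquiv.norm_map (reindexStarAlgEquiv e.symm) M

def kroneckerOneStarAlgHom : Matrix ι ι ℂ →⋆ₐ[ℂ] Matrix (ι × κ) (ι × κ) ℂ where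
  toFun A := A ⊗ₖ 1
  map_one' := one_kronecker_one
  map_mul' A B := by rw [← mul_kronecker_mul, one_mul]
  map_zero' := zero_kronecker _
  map_add' A B := add_kronecker _ _ _
  commutes' c := by simp [Algebra.algebraMap_eq_smul_one, smul_kronecker]
  map_star' A := by simp [star_eq_conjTranspose, conjTranspose_kronecker]

-- `A ⊗ₖ B = (A ⊗ₖ 1) (1 ⊗ₖ B)`, and star algebra homomorphisms of C⋆-algebras are contractive.
lemma l2_opNorm_kronecker_le (A : Matrix ι ι ℂ) (B : Matrix κ κ ℂ) : ‖A ⊗ₖ B‖ ≤ ‖A‖ * ‖B‖ := by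
  have hswap : (1 : Matrix ι ι ℂ) ⊗ₖ B = (B ⊗ₖ 1).submatrix Prod.swap Prod.swap := by
    ext ⟨a, b⟩ ⟨c, d⟩
    simp [mul_comm]
  calc ‖A ⊗ₖ B‖ = ‖(A ⊗ₖ 1) * (1 ⊗ₖ B)‖ := by rw [← mul_kronecker_mul, mul_one, one_mul]
    _ ≤ ‖A ⊗ₖ (1 : Matrix κ κ ℂ)‖ * ‖(1 : Matrix ι ι ℂ) ⊗ₖ B‖ := norm_mul_le _ _
    _ ≤ ‖A‖ * ‖B‖ := by
      gcongr
      · exact NonUnitalStarAlgHom.norm_apply_le (kroneckerOneStarAlgHom (κ := κ)) A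
      · rw [hswap, ← Equiv.coe_prodComm, l2_opNorm_submatrix_equiv]
        exact NonUnitalStarAlgHom.norm_apply_le (kroneckerOneStarAlgHom (κ := ι)) B

-- `X ≤ ‖X‖ • 1`, and `Tr ((‖X‖ • 1 - X) σ) ≥ 0` for `σ ≥ 0`.
open scoped MatrixOrder in
lemma re_trace_mul_le_l2_opNorm_mul {X σ : Matrix ι ι ℂ} (hX : X.IsHermitian)
    (hσ : σ.PosSemidef) : (X * σ).trace.re ≤ ‖X‖ * σ.trace.re := by
  obtain ⟨B, rfl⟩ := hσ.exists_eq_star_mul_self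
  have hgap : (algebraMap ℝ (Matrix ι ι ℂ) ‖X‖ - X).PosSemidef :=
    le_iff.mp hX.isSelfAdjoint.le_algebraMap_norm_self
  have hexpand : (B * (algebraMap ℝ (Matrix ι ι ℂ) ‖X‖ - X) * Bᴴ).trace
      = ‖X‖ * (star B * B).trace - (X * (star B * B)).trace := by
    rw [mul_sub, sub_mul, trace_sub, Algebra.algebraMap_eq_smul_one, mul_smul_comm, mul_one,
      smul_mul_assoc, trace_smul, trace_mul_comm, trace_mul_cycle, star_eq_conjTranspose]
    simp [Complex.real_smul, trace_mul_comm _ X]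
  have hnonneg := (hgap.mul_mul_conjTranspose_same B).trace_nonneg
  rw [hexpand, Complex.nonneg_iff] at hnonneg
  simpa [sub_nonneg] using hnonneg.1

end L2OpNorm

end Matrix

lemma IsState.norm_apply_le_one {ι : Type*} [Fintype ι] {ρ : Matrix ι ι ℂ} (hρ : IsState ρ)
    (p q : ι) : ‖ρ p q‖ ≤ 1 := by
  simpa [hρ.2] using hρ.1.norm_apply_le_re_trace p q

section StatePow

variable {α β : Type*}

lemma statePow_apply (n : ℕ) (M : Matrix (α × β) (α × β) ℂ) (p q) :
    statePow n M p q = ∏ i, M (p.1 i, p.2 i) (q.1 i, q.2 i) := rfl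

lemma statePow_zero (M : Matrix (α × β) (α × β) ℂ) : statePow 0 M = 1 := by
  ext p q
  rw [Subsingleton.elim p q]
  simp [statePow_apply]

lemma ptranspose_statePow (n : ℕ) (M : Matrix (α × β) (α × β) ℂ) :
    ptranspose (statePow n M) = statePow n (ptranspose M) := rfl

lemma conjTranspose_statePow (n : ℕ) (M : Matrix (α × β) (α × β) ℂ) :
    (statePow n M)ᴴ = statePow n Mᴴ := by
  ext p q
  simp [statePow_apply, star_prod]

lemma Matrix.IsHermitian.statePow {M : Matrix (α × β) (α × β) ℂ} (hM : M.IsHermitian) (n : ℕ) :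
    (statePow n M).IsHermitian := by
  rw [IsHermitian, conjTranspose_statePow, hM.eq]

def piFinSuccProdEquiv (n : ℕ) (α β : Type*) :
    (Fin (n + 1) → α) × (Fin (n + 1) → β) ≃ (α × β) × ((Fin n → α) × (Fin n → β)) :=
  ((Fin.consEquiv fun _ => α).symm.prodCongr (Fin.consEquiv fun _ => β).symm).trans
    (Equiv.prodProdProdComm _ _ _ _)

lemma statePow_succ (n : ℕ) (M : Matrix (α × β) (α × β) ℂ) :
    statePow (n + 1) M =
      (M ⊗ₖ statePow n M).submatrix (piFinSuccProdEquiv n α β) (piFinSuccProdEquiv n α β) := by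
  ext p q
  simp [statePow_apply, Fin.prod_univ_succ, piFinSuccProdEquiv, Fin.tail]

lemma l2_opNorm_statePow_le [Fintype α] [DecidableEq α] [Fintype β] [DecidableEq β]
    (n : ℕ) (M : Matrix (α × β) (α × β) ℂ) : ‖statePow n M‖ ≤ ‖M‖ ^ n := by
  induction n with
  | zero => rw [statePow_zero, pow_zero]; exact CStarRing.norm_one.le
  | succ n ih =>
    rw [statePow_succ, l2_opNorm_submatrix_equiv, pow_succ']
    exact (l2_opNorm_kronecker_le _ _).trans (by gcongr)

variable [Fintype α] [Fintype β]

lemma prod_univ_sum_prod {ι R : Type*} [Fintype ι] [DecidableEq ι] [CommSemiring R]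
    (f : ι → α × β → R) :
    ∏ i, ∑ s, f i s = ∑ r : (ι → α) × (ι → β), ∏ i, f i (r.1 i, r.2 i) := by
  rw [Finset.prod_univ_sum, Fintype.piFinset_univ]
  exact Fintype.sum_equiv (Equiv.arrowProdEquivProdArrow ι _ _) _ _ fun g => rfl

lemma statePow_mul (n : ℕ) (M N : Matrix (α × β) (α × β) ℂ) :
    statePow n M * statePow n N = statePow n (M * N) := by
  ext p q
  simp only [mul_apply, statePow_apply, ← Finset.prod_mul_distrib]
  exact (prod_univ_sum_prod fun i s => M (p.1 i, p.2 i) s * N s (q.1 i, q.2 i)).symm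

lemma trace_statePow (n : ℕ) (M : Matrix (α × β) (α × β) ℂ) :
    (statePow n M).trace = M.trace ^ n := by
  simp only [trace, diag_apply, statePow_apply]
  rw [← prod_univ_sum_prod fun _ s => M s s, Finset.prod_const, Finset.card_univ,
    Fintype.card_fin]

lemma Matrix.PosSemidef.statePow {M : Matrix (α × β) (α × β) ℂ} (hM : M.PosSemidef) (n : ℕ) :
    (statePow n M).PosSemidef := by
  obtain ⟨B, rfl⟩ := hM.exists_eq_star_mul_self
  rw [← statePow_mul, star_eq_conjTranspose, ← conjTranspose_statePow]
  exact posSemidef_conjTranspose_mul_self _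

lemma IsState.statePow {M : Matrix (α × β) (α × β) ℂ} (hM : IsState M) (n : ℕ) :
    IsState (statePow n M) :=
  ⟨hM.1.statePow n, by rw [trace_statePow, hM.2, one_pow]⟩

lemma isState_statePow_zero (M : Matrix (α × β) (α × β) ℂ) : IsState (statePow 0 M) :=
  ⟨statePow_zero M ▸ PosSemidef.one, by rw [trace_statePow, pow_zero]⟩

end StatePow

section Channel

variable {ιA ιB ιR : Type*}

lemma idTensor_apply (Φ : Matrix ιA ιA ℂ →ₗ[ℂ] Matrix ιB ιB ℂ)
    (M : Matrix (ιR × ιA) (ιR × ιA) ℂ) (p q : ιR × ιB) :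
    idTensor ιR Φ M p q = Φ (of fun a b => M (p.1, a) (q.1, b)) p.2 q.2 := rfl

variable [Fintype ιA]

lemma IsTP.trace_idTensor [Fintype ιB] [Fintype ιR] {Φ : Matrix ιA ιA ℂ →ₗ[ℂ] Matrix ιB ιB ℂ}
    (hΦ : IsTP Φ) (M : Matrix (ιR × ιA) (ιR × ιA) ℂ) : (idTensor ιR Φ M).trace = M.trace := by
  simp only [trace, diag_apply, Fintype.sum_prod_type]
  exact Finset.sum_congr rfl fun r _ => hΦ (of fun a b => M (r, a) (r, b))

lemma IsChannel.isState_idTensor [Fintype ιB] {Φ : Matrix ιA ιA ℂ →ₗ[ℂ] Matrix ιB ιB ℂ}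
    (hΦ : IsChannel Φ) {k : ℕ} {ρ : Matrix (Fin k × ιA) (Fin k × ιA) ℂ} (hρ : IsState ρ) :
    IsState (idTensor (Fin k) Φ ρ) :=
  ⟨hΦ.1 k ρ hρ.1, by rw [hΦ.2.trace_idTensor, hρ.2]⟩

variable [DecidableEq ιA]

lemma tensorPow_apply (n : ℕ) (Λ : Matrix ιA ιA ℂ →ₗ[ℂ] Matrix ιB ιB ℂ)
    (M : Matrix (Fin n → ιA) (Fin n → ιA) ℂ) (p q : Fin n → ιB) :
    tensorPow n Λ M p q = ∑ a : Fin n → ιA, ∑ b : Fin n → ιA,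
      M a b * ∏ i, Λ (single (a i) (b i) 1) (p i) (q i) := rfl

lemma linearMap_apply_eq_sum_single (Φ : Matrix ιA ιA ℂ →ₗ[ℂ] Matrix ιB ιB ℂ)
    (N : Matrix ιA ιA ℂ) (p q : ιB) :
    Φ N p q = ∑ st : ιA × ιA, N st.1 st.2 * Φ (single st.1 st.2 1) p q := by
  conv_lhs => rw [matrix_eq_sum_single N]
  simp only [map_sum, Matrix.sum_apply, Fintype.sum_prod_type]
  refine Finset.sum_congr rfl fun s _ => Finset.sum_congr rfl fun t _ => ?_
  rw [← smul_eq_mul, ← Matrix.smul_apply, ← LinearMap.map_smul, smul_single, smul_eq_mul, mul_one]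

lemma IsState.norm_idTensor_apply_le [Fintype ιR] (Φ : Matrix ιA ιA ℂ →ₗ[ℂ] Matrix ιB ιB ℂ)
    {ρ : Matrix (ιR × ιA) (ιR × ιA) ℂ} (hρ : IsState ρ) (p q : ιR × ιB) :
    ‖idTensor ιR Φ ρ p q‖ ≤ ∑ st : ιA × ιA, ‖Φ (single st.1 st.2 1) p.2 q.2‖ := by
  rw [idTensor_apply, linearMap_apply_eq_sum_single]
  refine (norm_sum_le _ _).trans (Finset.sum_le_sum fun st _ => ?_)
  rw [norm_mul]
  exact mul_le_of_le_one_left (norm_nonneg _) (hρ.norm_apply_le_one _ _)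

lemma idTensor_tensorPow_statePow [Fintype ιR] (Λ : Matrix ιA ιA ℂ →ₗ[ℂ] Matrix ιB ιB ℂ)
    (n : ℕ) (ρ : Matrix (ιR × ιA) (ιR × ιA) ℂ) :
    idTensor (Fin n → ιR) (tensorPow n Λ) (statePow n ρ) = statePow n (idTensor ιR Λ ρ) := by
  ext P Q
  rw [idTensor_apply, tensorPow_apply, statePow_apply]
  simp only [idTensor_apply]
  rw [Finset.prod_congr rfl fun i _ => linearMap_apply_eq_sum_single Λ _ (P.2 i) (Q.2 i),
    prod_univ_sum_prod, Fintype.sum_prod_type]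
  simp only [statePow_apply, of_apply, Finset.prod_mul_distrib]

end Channel

lemma ptranspose_one {ιA ιB : Type*} [DecidableEq ιA] [DecidableEq ιB] :
    ptranspose (1 : Matrix (ιA × ιB) (ιA × ιB) ℂ) = 1 := by
  ext ⟨a, b⟩ ⟨c, d⟩
  by_cases hac : a = c <;> by_cases hbd : b = d <;> simp [ptranspose, one_apply, hac, hbd, eq_comm]

section TemperedNegativity

variable {ιA ιB : Type*} [Fintype ιA] [DecidableEq ιA] [Fintype ιB] [DecidableEq ιB]

-- The entries of `X` are those of `X^Γ`, rearranged, so they are bounded by `‖X^Γ‖ ≤ 1`.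
lemma re_trace_mul_le_sum_norm {X : Matrix (ιA × ιB) (ιA × ιB) ℂ} (hX : ‖ptranspose X‖ ≤ 1)
    (ρ : Matrix (ιA × ιB) (ιA × ιB) ℂ) : (X * ρ).trace.re ≤ ∑ p, ∑ q, ‖ρ p q‖ := by
  have hentry (p q : ιA × ιB) : ‖X p q‖ ≤ 1 :=
    (norm_apply_le_l2_opNorm (ptranspose X) (p.1, q.2) (q.1, p.2)).trans hX
  calc (X * ρ).trace.re ≤ ‖(X * ρ).trace‖ := Complex.re_le_norm _
    _ ≤ ∑ p, ∑ q, ‖X p q * ρ q p‖ := by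
      simp only [trace, diag_apply, mul_apply]
      exact (norm_sum_le _ _).trans (Finset.sum_le_sum fun p _ => norm_sum_le _ _)
    _ ≤ ∑ p, ∑ q, ‖ρ q p‖ := by
      gcongr with p _ q _
      rw [norm_mul]
      exact mul_le_of_le_one_left (norm_nonneg _) (hentry p q)
    _ = ∑ p, ∑ q, ‖ρ p q‖ := Finset.sum_comm

lemma temperedNegRel_le_sum_norm (ρ ω : Matrix (ιA × ιB) (ιA × ιB) ℂ) :
    temperedNegRel ρ ω ≤ ∑ p, ∑ q, ‖ρ p q‖ :=
  Real.sSup_le (by rintro _ ⟨X, -, hX, -, rfl⟩; exact re_trace_mul_le_sum_norm hX ρ)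
    (by positivity)

lemma re_trace_mul_le_temperedNegRel {X ρ ω : Matrix (ιA × ιB) (ιA × ιB) ℂ} (hX : X.IsHermitian)
    (hXΓ : ‖ptranspose X‖ ≤ 1) (hXω : ‖X‖ = (X * ω).trace.re) :
    (X * ρ).trace.re ≤ temperedNegRel ρ ω :=
  le_csSup ⟨_, by rintro _ ⟨Y, -, hY, -, rfl⟩; exact re_trace_mul_le_sum_norm hY ρ⟩
    ⟨X, hX, hXΓ, hXω, rfl⟩

lemma temperedNegRel_nonneg (ρ ω : Matrix (ιA × ιB) (ιA × ιB) ℂ) : 0 ≤ temperedNegRel ρ ω := by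
  simpa using re_trace_mul_le_temperedNegRel (ρ := ρ) (ω := ω) isHermitian_zero
    (by simp [show ptranspose (0 : Matrix (ιA × ιB) (ιA × ιB) ℂ) = 0 from rfl]) (by simp)

lemma one_le_temperedNeg {σ : Matrix (ιA × ιB) (ιA × ιB) ℂ} (hσ : IsState σ) :
    1 ≤ temperedNeg σ := by
  have : Nonempty (ιA × ιB) := by
    by_contra h
    simpa [trace, not_nonempty_iff.mp h] using hσ.2
  have htr : (1 * σ).trace.re = 1 := by simp [hσ.2]
  calc 1 = (1 * σ).trace.re := htr.symm
    _ ≤ temperedNeg σ := re_trace_mul_le_temperedNegRel isHermitian_one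
      (by rw [ptranspose_one, CStarRing.norm_one]) (by rw [CStarRing.norm_one, htr])

lemma temperedNeg_pow_le_temperedNeg_statePow {σ : Matrix (ιA × ιB) (ιA × ιB) ℂ}
    (hσ : IsState σ) (n : ℕ) : temperedNeg σ ^ n ≤ temperedNeg (statePow n σ) := by
  have hσn := hσ.statePow n
  refine sSup_pow_le_of_forall
    ((pow_le_one₀ le_rfl zero_le_one).trans (one_le_temperedNeg hσn)) ?_
  rintro _ ⟨X, hX, hXΓ, hXσ, rfl⟩
  have hvalue : (statePow n X * statePow n σ).trace.re = (X * σ).trace.re ^ n := by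
    rw [statePow_mul, trace_statePow, ← hX.ofReal_re_trace_mul hσ.1.1, ← Complex.ofReal_pow,
      Complex.ofReal_re, Complex.ofReal_re]
  have hnorm : ‖statePow n X‖ = (statePow n X * statePow n σ).trace.re := by
    refine le_antisymm ?_ ?_
    · rw [hvalue, ← hXσ]
      exact l2_opNorm_statePow_le n X
    · simpa [hσn.2] using re_trace_mul_le_l2_opNorm_mul (hX.statePow n) hσn.1
  refine ⟨hXσ ▸ norm_nonneg X, hvalue ▸ re_trace_mul_le_temperedNegRel (hX.statePow n) ?_ hnorm⟩
  rw [ptranspose_statePow]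
  exact (l2_opNorm_statePow_le n _).trans (pow_le_one₀ (norm_nonneg _) hXΓ)

end TemperedNegativity

section ChannelTemperedNegativity

variable {ιA ιB : Type*} [Fintype ιA] [DecidableEq ιA] [Fintype ιB] [DecidableEq ιB]

lemma temperedNeg_idTensor_le_chanTemperedNeg (Φ : Matrix ιA ιA ℂ →ₗ[ℂ] Matrix ιB ιB ℂ)
    {ρ : Matrix (ιA × ιA) (ιA × ιA) ℂ} (hρ : IsState ρ) :
    temperedNeg (idTensor ιA Φ ρ) ≤ chanTemperedNeg Φ := by
  refine le_csSup ⟨∑ p : ιA × ιB, ∑ q : ιA × ιB, ∑ st : ιA × ιA,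
    ‖Φ (single st.1 st.2 1) p.2 q.2‖, ?_⟩ ⟨ρ, hρ, rfl⟩
  rintro _ ⟨ρ', hρ', rfl⟩
  exact (temperedNegRel_le_sum_norm _ _).trans
    (by gcongr with p _ q _; exact hρ'.norm_idTensor_apply_le Φ p q)

lemma chanTemperedNeg_nonneg (Φ : Matrix ιA ιA ℂ →ₗ[ℂ] Matrix ιB ιB ℂ) :
    0 ≤ chanTemperedNeg Φ :=
  Real.sSup_nonneg (by rintro _ ⟨ρ, -, rfl⟩; exact temperedNegRel_nonneg _ _)

lemma one_le_chanTemperedNeg_tensorPow_zero (Λ : Matrix ιA ιA ℂ →ₗ[ℂ] Matrix ιB ιB ℂ) :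
    1 ≤ chanTemperedNeg (tensorPow 0 Λ) := by
  calc 1 ≤ temperedNeg (statePow 0 (idTensor ιA Λ 0)) :=
        one_le_temperedNeg (isState_statePow_zero _)
    _ = temperedNeg (idTensor _ (tensorPow 0 Λ) (statePow 0 0)) := by
        rw [idTensor_tensorPow_statePow]
    _ ≤ chanTemperedNeg (tensorPow 0 Λ) :=
        temperedNeg_idTensor_le_chanTemperedNeg _ (isState_statePow_zero _)

lemma temperedNeg_idTensor_pow_le_chanTemperedNeg_tensorPow
    (Λ : Matrix ιA ιA ℂ →ₗ[ℂ] Matrix ιB ιB ℂ) {ρ : Matrix (ιA × ιA) (ιA × ιA) ℂ}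
    (hρ : IsState ρ) (hσ : IsState (idTensor ιA Λ ρ)) (n : ℕ) :
    temperedNeg (idTensor ιA Λ ρ) ^ n ≤ chanTemperedNeg (tensorPow n Λ) :=
  calc temperedNeg (idTensor ιA Λ ρ) ^ n ≤ temperedNeg (statePow n (idTensor ιA Λ ρ)) :=
        temperedNeg_pow_le_temperedNeg_statePow hσ n
    _ = temperedNeg (idTensor _ (tensorPow n Λ) (statePow n ρ)) := by
        rw [idTensor_tensorPow_statePow]
    _ ≤ chanTemperedNeg (tensorPow n Λ) :=
        temperedNeg_idTensor_le_chanTemperedNeg _ (hρ.statePow n)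

end ChannelTemperedNegativity

/-- **Supermultiplicativity of the channel tempered negativity under tensor powers:**
`N_τ(Λ^{⊗n}) ≥ N_τ(Λ)^n` for every channel `Λ`. -/
theorem chanTemperedNeg_tensorPow_supermultiplicative {dA dB : ℕ}
    (Λ : Matrix (Fin dA) (Fin dA) ℂ →ₗ[ℂ] Matrix (Fin dB) (Fin dB) ℂ)
    (hΛ : IsChannel Λ) (n : ℕ) :
    chanTemperedNeg (tensorPow n Λ) ≥ (chanTemperedNeg Λ) ^ n := by
  refine sSup_pow_le_of_forall ?_ ?_
  · rcases n with _ | n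
    · simpa using one_le_chanTemperedNeg_tensorPow_zero Λ
    · simpa using chanTemperedNeg_nonneg (tensorPow (n + 1) Λ)
  · rintro _ ⟨ρ, hρ, rfl⟩
    exact ⟨temperedNegRel_nonneg _ _, temperedNeg_idTensor_pow_le_chanTemperedNeg_tensorPow Λ hρ
      (hΛ.isState_idTensor hρ) n⟩
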